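/- Let R be a commutative F-algebra admitting two well agreeing near weights ρ and σ, so that R is an integral domain, and let K be its field of fractions. Then there is a well-defined discrete valuation v_ρ : K → ℤ ∪ {∞} of K over F, given by v_ρ(0) := ∞ and v_ρ(f/g) := ρ̃(g) − ρ̃(f) for f, g ∈ R \ {0}; that is, v_ρ satisfies v_ρ(xy) = v_ρ(x) + v_ρ(y), v_ρ(x + y) ≥ min{v_ρ(x), v_ρ(y)}, v_ρ(x) = ∞ iff x = 0, v_ρ(λ) = 0 for every λ ∈ F \ {0}, and v_ρ maps K \ {0} onto ℤ. -/

import Mathlib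

structure NearWeight (F R : Type*) [Field F] [CommRing R] [Algebra F R] where
  w : R → WithBot ℕ
  N0 : ∀ f : R, w f = ⊥ ↔ f = 0
  N1 : ∀ (c : F) (f : R), c ≠ 0 → w (c • f) = w f
  N2 : ∀ f g : R, w (f + g) ≤ max (w f) (w g)
  N3 : ∀ f g h : R, w f < w g → w (f * h) ≤ w (g * h)
  N3' : ∀ f g h : R, w f < w g → w 1 < w h → w (f * h) < w (g * h)
  N4 : ∀ f g : R, w 1 < w f → w 1 < w g → w f = w g →
      ∃ c : F, c ≠ 0 ∧ w (f - c • g) < w f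
  N5 : ∀ f g : R, w (f * g) ≤ w f + w g
  N5' : ∀ f g : R, w 1 < w f → w 1 < w g → w (f * g) = w f + w g
  norm0 : ∀ f : R, f ≠ 0 → w f ≤ w 1 → w f = 0
  normgcd : ∀ d : ℕ, (∀ f : R, w 1 < w f → ∃ k : ℕ, w f = ((d * k : ℕ) : WithBot ℕ)) → d = 1

namespace NearWeight

variable {F R : Type*} [Field F] [CommRing R] [Algebra F R]

def U (ρ : NearWeight F R) : Set R := {r | ρ.w r ≤ ρ.w 1}

def M (ρ : NearWeight F R) : Set R := {r | ρ.w 1 < ρ.w r}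

def nval (ρ : NearWeight F R) (f : R) : ℕ := WithBot.unbotD 0 (ρ.w f)

def Hset (ρ σ : NearWeight F R) (S : Set R) : Set (ℕ × ℕ) :=
  {p | ∃ f ∈ S, f ≠ 0 ∧ (ρ.nval f, σ.nval f) = p}

def WellAgreeing (ρ σ : NearWeight F R) : Prop :=
  (Hset ρ σ Set.univ)ᶜ.Finite ∧ ρ.U ∩ σ.U = Set.range (algebraMap F R)

noncomputable def xH (ρ σ : NearWeight F R) (n : ℕ) : ℕ :=
  sInf {m | (m, n) ∈ Hset ρ σ Set.univ}

noncomputable def yH (ρ σ : NearWeight F R) (n : ℕ) : ℕ :=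
  sInf {m | (n, m) ∈ Hset ρ σ Set.univ}

def lub (a b : ℕ × ℕ) : ℕ × ℕ := (max a.1 b.1, max a.2 b.2)

noncomputable def Gamma (ρ σ : NearWeight F R) : Set (ℕ × ℕ) :=
  {p | ∃ m : ℕ, p = (m, yH ρ σ m)} ∪ {p | ∃ n : ℕ, p = (xH ρ σ n, n)}

def Hbarx (ρ σ : NearWeight F R) : Set ℕ := {m | (m, 0) ∈ Hset ρ σ Set.univ}

def Hbary (ρ σ : NearWeight F R) : Set ℕ := {n | (0, n) ∈ Hset ρ σ Set.univ}

noncomputable def GammaTilde (ρ σ : NearWeight F R) : Set (ℕ × ℕ) :=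
  {p | ∃ m : ℕ, m ∉ Hbarx ρ σ ∧ p = (m, yH ρ σ m)}

def Delta (p : ℕ × ℕ) : Set (ℕ × ℕ) :=
  {q | (q.1 = p.1 ∧ q.2 < p.2) ∨ (q.2 = p.2 ∧ q.1 < p.1)}

noncomputable def tw (ρ : NearWeight F R) (f : R) : ℤ :=
  sInf {z : ℤ | ∃ g ∈ ρ.M, z = (ρ.nval (f * g) : ℤ) - (ρ.nval g : ℤ)}

end NearWeight

/-!
Everything rests on companions: every `f ≠ 0` admits `h ∈ M_ρ` with `f * h ∈ M_ρ`. Given one,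
(N5) shows that the minimum defining `ρ̃ f` is attained at `h`, so `ρ̃ f = ρ(f h) - ρ(h)`;
computing with a common companion of `f` and `g` makes `ρ̃` additive on products and
`ρ̃ (f + g) ≤ max (ρ̃ f) (ρ̃ g)`. Hence `-ρ̃` is an additive valuation of `R`, which extends to
the fraction field. On `M_ρ` we have `ρ̃ = ρ`, so the value group contains the subgroup of `ℤ`
generated by `ρ(M_ρ)`, which is all of `ℤ` by the gcd normalisation.

Companions come from a descent on `σ`. Cofiniteness of `H` yields `d` with `ρ(d) > 0 = σ(d)`;
if `σ(f) > 0`, multiplying `f` by `d`, or by `1 - c d` with `c` given by (N4), lowers `σ(f)`.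
The descent ends at a multiple `f r` with `ρ(f r) > 0`, or with `ρ(f r) = σ(f r) = 0`, that is
`f r ∈ U_ρ ∩ U_σ = F`, and then `f r m ∈ M_ρ` for every `m ∈ M_ρ`.
-/

namespace NearWeight

variable {F R : Type*} [Field F] [CommRing R] [Algebra F R]

section Basic

variable (ρ : NearWeight F R) {f g : R}

@[simp]
lemma nval_zero : ρ.nval 0 = 0 := by
  simp [nval, (ρ.N0 0).2 rfl]

lemma w_eq_nval (hf : f ≠ 0) : ρ.w f = ρ.nval f := by
  cases h : ρ.w f with
  | bot => exact absurd ((ρ.N0 f).1 h) hf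
  | coe n => simp [nval, h]; rfl

lemma nval_smul {c : F} (hc : c ≠ 0) (f : R) : ρ.nval (c • f) = ρ.nval f := by
  simp only [nval, ρ.N1 c f hc]

@[simp]
lemma nval_neg (f : R) : ρ.nval (-f) = ρ.nval f := by
  simpa using ρ.nval_smul (neg_ne_zero.2 (one_ne_zero (α := F))) f

lemma nval_add_le (f g : R) : ρ.nval (f + g) ≤ max (ρ.nval f) (ρ.nval g) := by
  rcases eq_or_ne (f + g) 0 with hfg | hfg
  · simp [hfg]
  rcases eq_or_ne f 0 with rfl | hf
  · simp
  rcases eq_or_ne g 0 with rfl | hg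
  · simp
  have h := ρ.N2 f g
  rw [ρ.w_eq_nval hfg, ρ.w_eq_nval hf, ρ.w_eq_nval hg, le_max_iff] at h
  rw [le_max_iff]
  exact_mod_cast h

lemma nval_add_of_lt (h : ρ.nval f < ρ.nval g) : ρ.nval (f + g) = ρ.nval g := by
  refine le_antisymm ((ρ.nval_add_le f g).trans (max_le h.le le_rfl)) ?_
  have := ρ.nval_add_le (f + g) (-f)
  rw [add_neg_cancel_comm, nval_neg] at this
  omega

lemma nval_mul_le (f g : R) : ρ.nval (f * g) ≤ ρ.nval f + ρ.nval g := by
  rcases eq_or_ne (f * g) 0 with hfg | hfg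
  · simp [hfg]
  have h := ρ.N5 f g
  rw [ρ.w_eq_nval hfg, ρ.w_eq_nval (left_ne_zero_of_mul hfg),
    ρ.w_eq_nval (right_ne_zero_of_mul hfg)] at h
  exact_mod_cast h

lemma ne_zero_of_nval_pos (h : 0 < ρ.nval f) : f ≠ 0 := by
  rintro rfl
  simp at h

lemma ne_zero_of_mem_M (hf : f ∈ ρ.M) : f ≠ 0 := by
  rintro rfl
  simp [M, (ρ.N0 0).2 rfl] at hf

lemma M_nonempty : ρ.M.Nonempty := by
  by_contra h
  simpa using ρ.normgcd 0 fun f hf => (h ⟨f, hf⟩).elim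

end Basic

section Nontrivial

variable [Nontrivial R] (ρ : NearWeight F R) {f g : R}

lemma w_one : ρ.w 1 = 0 :=
  ρ.norm0 1 one_ne_zero le_rfl

lemma mem_M_iff : f ∈ ρ.M ↔ 0 < ρ.nval f := by
  rcases eq_or_ne f 0 with rfl | hf
  · simp [M, (ρ.N0 0).2 rfl]
  change ρ.w 1 < ρ.w f ↔ _
  rw [ρ.w_one, ρ.w_eq_nval hf]
  exact_mod_cast Iff.rfl

@[simp]
lemma nval_one : ρ.nval 1 = 0 := by
  simp [nval, ρ.w_one]

lemma mem_U_iff : f ∈ ρ.U ↔ ρ.nval f = 0 := by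
  have hUM : f ∈ ρ.U ↔ f ∉ ρ.M := by simp [U, M]
  rw [hUM, mem_M_iff, not_lt, Nat.le_zero]

lemma nval_mul_of_mem_M (hf : f ∈ ρ.M) (hg : g ∈ ρ.M) :
    ρ.nval (f * g) = ρ.nval f + ρ.nval g := by
  have h := ρ.N5' f g hf hg
  rw [ρ.mem_M_iff] at hf hg
  rw [ρ.w_eq_nval (ρ.ne_zero_of_nval_pos hf), ρ.w_eq_nval (ρ.ne_zero_of_nval_pos hg)] at h
  have hfg : f * g ≠ 0 := fun h0 => by
    rw [h0, (ρ.N0 0).2 rfl, ← Nat.cast_add] at h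
    exact WithBot.bot_ne_coe h
  rw [ρ.w_eq_nval hfg] at h
  exact_mod_cast h

lemma mul_mem_M (hf : f ∈ ρ.M) (hg : g ∈ ρ.M) : f * g ∈ ρ.M := by
  rw [ρ.mem_M_iff, ρ.nval_mul_of_mem_M hf hg]
  exact Nat.add_pos_left ((ρ.mem_M_iff).1 hf) _

lemma exists_nval_sub_smul_lt (hf : f ∈ ρ.M) (hg : g ∈ ρ.M) (h : ρ.nval f = ρ.nval g) :
    ∃ c : F, c ≠ 0 ∧ ρ.nval (f - c • g) < ρ.nval f := by
  have hf0 := ρ.ne_zero_of_mem_M hf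
  obtain ⟨c, hc, hlt⟩ :=
    ρ.N4 f g hf hg (by rw [ρ.w_eq_nval hf0, ρ.w_eq_nval (ρ.ne_zero_of_mem_M hg), h])
  rw [ρ.w_eq_nval hf0] at hlt
  exact ⟨c, hc, (WithBot.unbotD_lt_iff fun _ => (ρ.mem_M_iff).1 hf).2 hlt⟩

end Nontrivial

section Descent

variable {ρ σ : NearWeight F R}

lemma exists_nval_pos_nval_eq_zero (hH : (Hset ρ σ Set.univ)ᶜ.Finite) :
    ∃ d : R, 0 < ρ.nval d ∧ σ.nval d = 0 := by
  have hrow : ((fun a => (a, 0)) ⁻¹' (Hset ρ σ Set.univ)ᶜ).Finite :=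
    hH.preimage (Prod.mk_left_injective 0).injOn
  obtain ⟨a, ha⟩ := (hrow.union (Set.finite_singleton 0)).infinite_compl.nonempty
  simp only [Set.mem_compl_iff, Set.mem_union, Set.mem_preimage, Set.mem_singleton_iff,
    not_or, not_not] at ha
  obtain ⟨⟨d, -, -, hd⟩, ha0⟩ := ha
  simp only [Prod.mk.injEq] at hd
  exact ⟨d, hd.1 ▸ Nat.pos_of_ne_zero ha0, hd.2⟩

variable [Nontrivial R]

lemma exists_nval_mul_lt {d f : R} (hd : 0 < ρ.nval d) (hdσ : σ.nval d = 0)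
    (hf : 0 < σ.nval f) : ∃ g : R, 0 < ρ.nval g ∧ σ.nval (f * g) < σ.nval f := by
  have hle : σ.nval (f * d) ≤ σ.nval f := by simpa [hdσ] using σ.nval_mul_le f d
  rcases hle.lt_or_eq with hlt | heq
  · exact ⟨d, hd, hlt⟩
  obtain ⟨c, hc, hlt⟩ := σ.exists_nval_sub_smul_lt ((σ.mem_M_iff).2 hf)
    ((σ.mem_M_iff).2 (heq ▸ hf)) heq.symm
  have hρ : ρ.nval (1 - c • d) = ρ.nval d := by
    rw [sub_eq_add_neg, ρ.nval_add_of_lt] <;> simp [ρ.nval_smul hc, hd]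
  refine ⟨1 - c • d, hρ ▸ hd, ?_⟩
  rwa [mul_sub, mul_one, mul_smul_comm]

end Descent

section Domain

variable [IsDomain R] {ρ σ : NearWeight F R} {f g : R}

lemma exists_nval_mul_pos (hwa : WellAgreeing ρ σ) (hf : f ≠ 0) :
    ∃ r : R, 0 < ρ.nval (f * r) := by
  obtain ⟨d, hd, hdσ⟩ := exists_nval_pos_nval_eq_zero hwa.1
  induction hn : σ.nval f using Nat.strong_induction_on generalizing f with
  | _ n ih =>
  rcases Nat.eq_zero_or_pos (ρ.nval f) with hρ | hρ
  swap
  · exact ⟨1, by rwa [mul_one]⟩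
  rcases Nat.eq_zero_or_pos (σ.nval f) with hσ | hσ
  · have hUU : f ∈ ρ.U ∩ σ.U := ⟨(ρ.mem_U_iff).2 hρ, (σ.mem_U_iff).2 hσ⟩
    rw [hwa.2] at hUU
    obtain ⟨c, rfl⟩ := hUU
    have hc : c ≠ 0 := by
      rintro rfl
      simp at hf
    obtain ⟨m, hm⟩ := ρ.M_nonempty
    refine ⟨m, ?_⟩
    rw [← Algebra.smul_def, ρ.nval_smul hc]
    exact (ρ.mem_M_iff).1 hm
  obtain ⟨g, hg, hlt⟩ := exists_nval_mul_lt hd hdσ hσ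
  obtain ⟨r, hr⟩ := ih _ (hn ▸ hlt) (mul_ne_zero hf (ρ.ne_zero_of_nval_pos hg)) rfl
  exact ⟨g * r, by rwa [← mul_assoc]⟩

lemma exists_mem_M_mul_mem_M (hwa : WellAgreeing ρ σ) (hf : f ≠ 0) :
    ∃ h ∈ ρ.M, f * h ∈ ρ.M := by
  obtain ⟨r, hr⟩ := exists_nval_mul_pos hwa hf
  by_cases hrM : r ∈ ρ.M
  · exact ⟨r, hrM, (ρ.mem_M_iff).2 hr⟩
  obtain ⟨m, hm⟩ := ρ.M_nonempty
  refine ⟨m, hm, ρ.mul_mem_M ((ρ.mem_M_iff).2 ?_) hm⟩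
  have := ρ.nval_mul_le f r
  rw [ρ.mem_M_iff, not_lt, Nat.le_zero] at hrM
  omega

lemma exists_mem_M_mul_mem_M₂ (hwa : WellAgreeing ρ σ) (hf : f ≠ 0) (hg : g ≠ 0) :
    ∃ h ∈ ρ.M, f * h ∈ ρ.M ∧ g * h ∈ ρ.M := by
  obtain ⟨h₁, hh₁, hfh₁⟩ := exists_mem_M_mul_mem_M hwa hf
  obtain ⟨h₂, hh₂, hgh₂⟩ := exists_mem_M_mul_mem_M hwa hg
  refine ⟨h₁ * h₂, ρ.mul_mem_M hh₁ hh₂, ?_, ?_⟩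
  · rw [← mul_assoc]
    exact ρ.mul_mem_M hfh₁ hh₂
  · rw [mul_left_comm]
    exact ρ.mul_mem_M hh₁ hgh₂

end Domain

section Tilde

variable [IsDomain R] (ρ : NearWeight F R) {σ : NearWeight F R} {f g h : R}

lemma isLeast_tw (hh : h ∈ ρ.M) (hfh : f * h ∈ ρ.M) :
    IsLeast {z : ℤ | ∃ g ∈ ρ.M, z = (ρ.nval (f * g) : ℤ) - (ρ.nval g : ℤ)}
      ((ρ.nval (f * h) : ℤ) - ρ.nval h) := by
  refine ⟨⟨h, hh, rfl⟩, ?_⟩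
  rintro _ ⟨g, hg, rfl⟩
  have h₁ := ρ.nval_mul_of_mem_M hfh hg
  have h₂ := ρ.nval_mul_le (f * g) h
  rw [mul_right_comm] at h₁
  omega

lemma tw_eq (hh : h ∈ ρ.M) (hfh : f * h ∈ ρ.M) :
    ρ.tw f = (ρ.nval (f * h) : ℤ) - ρ.nval h :=
  (ρ.isLeast_tw hh hfh).csInf_eq

lemma tw_le (hwa : WellAgreeing ρ σ) (hf : f ≠ 0) (hh : h ∈ ρ.M) :
    ρ.tw f ≤ (ρ.nval (f * h) : ℤ) - ρ.nval h := by
  obtain ⟨h', hh', hfh'⟩ := exists_mem_M_mul_mem_M hwa hf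
  rw [ρ.tw_eq hh' hfh']
  exact (ρ.isLeast_tw hh' hfh').2 ⟨h, hh, rfl⟩

lemma tw_of_mem_M (hh : h ∈ ρ.M) : ρ.tw h = ρ.nval h := by
  obtain ⟨m, hm⟩ := ρ.M_nonempty
  rw [ρ.tw_eq hm (ρ.mul_mem_M hh hm), ρ.nval_mul_of_mem_M hh hm]
  push_cast
  ring

lemma tw_algebraMap {c : F} (hc : c ≠ 0) : ρ.tw (algebraMap F R c) = 0 := by
  obtain ⟨m, hm⟩ := ρ.M_nonempty
  have hcm : algebraMap F R c * m = c • m := (Algebra.smul_def c m).symm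
  have hcmM : algebraMap F R c * m ∈ ρ.M := by
    rw [ρ.mem_M_iff, hcm, ρ.nval_smul hc]
    exact (ρ.mem_M_iff).1 hm
  rw [ρ.tw_eq hm hcmM, hcm, ρ.nval_smul hc, sub_self]

lemma tw_one : ρ.tw 1 = 0 := by
  simpa using ρ.tw_algebraMap one_ne_zero

lemma tw_mul (hwa : WellAgreeing ρ σ) (hf : f ≠ 0) (hg : g ≠ 0) :
    ρ.tw (f * g) = ρ.tw f + ρ.tw g := by
  obtain ⟨h, hh, hfh, hgh⟩ := exists_mem_M_mul_mem_M₂ hwa hf hg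
  have hfghh : f * g * (h * h) = f * h * (g * h) := by ring
  rw [ρ.tw_eq (ρ.mul_mem_M hh hh) (hfghh ▸ ρ.mul_mem_M hfh hgh), hfghh,
    ρ.nval_mul_of_mem_M hfh hgh, ρ.nval_mul_of_mem_M hh hh, ρ.tw_eq hh hfh, ρ.tw_eq hh hgh]
  push_cast
  ring

lemma tw_add_le (hwa : WellAgreeing ρ σ) (hf : f ≠ 0) (hg : g ≠ 0) (hfg : f + g ≠ 0) :
    ρ.tw (f + g) ≤ max (ρ.tw f) (ρ.tw g) := by
  obtain ⟨h, hh, hfh, hgh⟩ := exists_mem_M_mul_mem_M₂ hwa hf hg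
  have hle := ρ.tw_le hwa hfg hh
  have hmax := ρ.nval_add_le (f * h) (g * h)
  rw [← add_mul] at hmax
  rw [ρ.tw_eq hh hfh, ρ.tw_eq hh hgh]
  omega

end Tilde

lemma closure_nval_M_eq_top (ρ : NearWeight F R) :
    AddSubgroup.closure {z : ℤ | ∃ h ∈ ρ.M, (ρ.nval h : ℤ) = z} = ⊤ := by
  obtain ⟨d, hd⟩ :=
    Int.subgroup_cyclic (AddSubgroup.closure {z : ℤ | ∃ h ∈ ρ.M, (ρ.nval h : ℤ) = z})
  have hdvd : ∀ h ∈ ρ.M, d ∣ (ρ.nval h : ℤ) := fun h hh => by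
    rw [← Int.mem_zmultiples_iff, AddSubgroup.zmultiples_eq_closure, ← hd]
    exact AddSubgroup.subset_closure ⟨h, hh, rfl⟩
  have hd1 : d.natAbs = 1 := ρ.normgcd _ fun f hf => by
    obtain ⟨k, hk⟩ := Int.natAbs_dvd_natAbs.2 (hdvd f hf)
    exact ⟨k, by rw [ρ.w_eq_nval (ρ.ne_zero_of_mem_M hf), ← hk, Int.natAbs_natCast]⟩
  rw [hd, ← AddSubgroup.zmultiples_eq_closure, eq_top_iff]
  intro z _
  rw [Int.mem_zmultiples_iff]
  exact (Int.isUnit_iff_natAbs_eq.2 hd1).dvd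

section Valuation

variable [IsDomain R] (ρ : NearWeight F R) {σ : NearWeight F R} (hwa : WellAgreeing ρ σ)

open scoped Classical in
noncomputable def intAddValuation : AddValuation R (WithTop ℤ) :=
  AddValuation.of (fun f => if f = 0 then ⊤ else ((-ρ.tw f : ℤ) : WithTop ℤ)) (if_pos rfl)
    (by simp [ρ.tw_one])
    (fun f g => by
      by_cases hf : f = 0
      · simp [hf]
      by_cases hg : g = 0
      · simp [hg]
      by_cases hfg : f + g = 0
      · simp [hfg]
      simp only [if_neg hf, if_neg hg, if_neg hfg, ← WithTop.coe_min, WithTop.coe_le_coe]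
      have := ρ.tw_add_le hwa hf hg hfg
      omega)
    (fun f g => by
      by_cases hf : f = 0
      · simp [hf]
      by_cases hg : g = 0
      · simp [hg]
      simp only [if_neg hf, if_neg hg, if_neg (mul_ne_zero hf hg), ← WithTop.coe_add,
        ρ.tw_mul hwa hf hg, neg_add])

lemma intAddValuation_of_ne_zero {f : R} (hf : f ≠ 0) :
    (ρ.intAddValuation hwa) f = ((-ρ.tw f : ℤ) : WithTop ℤ) :=
  if_neg hf

lemma nonZeroDivisors_le_primeCompl_supp :
    nonZeroDivisors R ≤ (AddValuation.toValuation (ρ.intAddValuation hwa)).supp.primeCompl :=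
  fun x hx => by
    rw [Ideal.mem_primeCompl_iff]
    change x ∉ (ρ.intAddValuation hwa).supp
    rw [AddValuation.mem_supp_iff, ρ.intAddValuation_of_ne_zero hwa (nonZeroDivisors.ne_zero hx)]
    exact WithTop.coe_ne_top

variable (K : Type*) [Field K] [Algebra R K] [IsFractionRing R K]

noncomputable def addValuation : AddValuation K (WithTop ℤ) :=
  AddValuation.ofValuation <|
    (AddValuation.toValuation (ρ.intAddValuation hwa)).extendToLocalization
      (ρ.nonZeroDivisors_le_primeCompl_supp hwa) K

@[simp]
lemma addValuation_algebraMap (f : R) :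
    (ρ.addValuation hwa K) (algebraMap R K f) = (ρ.intAddValuation hwa) f :=
  Valuation.extendToLocalization_apply_map_apply _ (ρ.nonZeroDivisors_le_primeCompl_supp hwa) K f

lemma addValuation_div {f g : R} (hf : f ≠ 0) (hg : g ≠ 0) :
    (ρ.addValuation hwa K) (algebraMap R K f / algebraMap R K g) =
      ((ρ.tw g - ρ.tw f : ℤ) : WithTop ℤ) := by
  rw [AddValuation.map_div, addValuation_algebraMap, addValuation_algebraMap,
    ρ.intAddValuation_of_ne_zero hwa hf, ρ.intAddValuation_of_ne_zero hwa hg,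
    ← WithTop.LinearOrderedAddCommGroup.coe_sub]
  congr 1
  ring

lemma exists_addValuation_eq (z : ℤ) : ∃ x : K, x ≠ 0 ∧ (ρ.addValuation hwa K) x = z := by
  have hz : z ∈ AddSubgroup.closure {z : ℤ | ∃ h ∈ ρ.M, (ρ.nval h : ℤ) = z} := by
    rw [closure_nval_M_eq_top]
    exact AddSubgroup.mem_top z
  induction hz using AddSubgroup.closure_induction with
  | mem _ hz =>
    obtain ⟨h, hh, rfl⟩ := hz
    have hh0 := ρ.ne_zero_of_mem_M hh
    refine ⟨(algebraMap R K h)⁻¹,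
      inv_ne_zero ((map_ne_zero_iff _ (IsFractionRing.injective R K)).2 hh0), ?_⟩
    rw [AddValuation.map_inv, addValuation_algebraMap, ρ.intAddValuation_of_ne_zero hwa hh0,
      ρ.tw_of_mem_M hh, ← WithTop.LinearOrderedAddCommGroup.coe_neg, neg_neg]
  | zero => exact ⟨1, one_ne_zero, AddValuation.map_one _⟩
  | add _ _ _ _ hx hy =>
    obtain ⟨x, hx0, hvx⟩ := hx
    obtain ⟨y, hy0, hvy⟩ := hy
    exact ⟨x * y, mul_ne_zero hx0 hy0, by rw [AddValuation.map_mul, hvx, hvy, WithTop.coe_add]⟩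
  | neg _ _ hx =>
    obtain ⟨x, hx0, hvx⟩ := hx
    exact ⟨x⁻¹, inv_ne_zero hx0, by
      rw [AddValuation.map_inv, hvx, WithTop.LinearOrderedAddCommGroup.coe_neg]⟩

end Valuation

end NearWeight

variable {F R : Type*} [Field F] [CommRing R] [Algebra F R]

theorem stmt19_general [IsDomain R]
    (ρ σ : NearWeight F R) (hwa : NearWeight.WellAgreeing ρ σ) :
    ∃ v : FractionRing R → WithTop ℤ,
      v 0 = ⊤ ∧
      (∀ f g : R, f ≠ 0 → g ≠ 0 →
        v (algebraMap R (FractionRing R) f / algebraMap R (FractionRing R) g) =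
          ((NearWeight.tw ρ g - NearWeight.tw ρ f : ℤ) : WithTop ℤ)) ∧
      (∀ x y : FractionRing R, v (x * y) = v x + v y) ∧
      (∀ x y : FractionRing R, min (v x) (v y) ≤ v (x + y)) ∧
      (∀ x : FractionRing R, v x = ⊤ ↔ x = 0) ∧
      (∀ c : F, c ≠ 0 → v (algebraMap R (FractionRing R) (c • (1 : R))) = 0) ∧
      (∀ z : ℤ, ∃ x : FractionRing R, x ≠ 0 ∧ v x = (z : WithTop ℤ)) := by
  refine ⟨ρ.addValuation hwa (FractionRing R), AddValuation.map_zero _,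
    fun f g hf hg => ρ.addValuation_div hwa _ hf hg, AddValuation.map_mul _,
    AddValuation.map_add _, fun x => AddValuation.top_iff _, fun c hc => ?_,
    ρ.exists_addValuation_eq hwa _⟩
  rw [← Algebra.algebraMap_eq_smul_one, NearWeight.addValuation_algebraMap,
    ρ.intAddValuation_of_ne_zero hwa ((map_ne_zero _).2 hc), ρ.tw_algebraMap hc]
  rfl

theorem stmt19 [IsDomain R]
    (hinj : Function.Injective (algebraMap F R))
    (hsur : ¬ Function.Surjective (algebraMap F R))
    (ρ σ : NearWeight F R) (hwa : NearWeight.WellAgreeing ρ σ) :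
    ∃ v : FractionRing R → WithTop ℤ,
      v 0 = ⊤ ∧
      (∀ f g : R, f ≠ 0 → g ≠ 0 →
        v (algebraMap R (FractionRing R) f / algebraMap R (FractionRing R) g) =
          ((NearWeight.tw ρ g - NearWeight.tw ρ f : ℤ) : WithTop ℤ)) ∧
      (∀ x y : FractionRing R, v (x * y) = v x + v y) ∧
      (∀ x y : FractionRing R, min (v x) (v y) ≤ v (x + y)) ∧
      (∀ x : FractionRing R, v x = ⊤ ↔ x = 0) ∧
      (∀ c : F, c ≠ 0 → v (algebraMap R (FractionRing R) (c • (1 : R))) = 0) ∧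
      (∀ z : ℤ, ∃ x : FractionRing R, x ≠ 0 ∧ v x = (z : WithTop ℤ)) :=
  stmt19_general ρ σ hwa
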